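/- arXiv:1207.0547 — 3 statements merged into one kernel-verified Lean document; each statement's English description precedes it below -/
import Mathlib

section
/- Let A be the p×p strictly upper triangular matrix of a directed line graph: A_{i,i+1} = a_i for 1 ≤ i ≤ p−1 and all other entries zero. Then the covariance matrix Σ = ((I−A)(I−A)ᵀ)⁻¹ satisfies, for i < j, Σ_{ij} = (1 + a_{i−1}²(1 + a_{i−2}²(⋯(1 + a₁²)⋯)))·∏_{k=i}^{j−1} a_k. -/
open Matrix Finset

def lineTrekFactor (a : ℕ → ℝ) : ℕ → ℝ
  | 0 => 1
  | (i + 1) => 1 + (a i) ^ 2 * lineTrekFactor a i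

lemma trek_sum (a : ℕ → ℝ) (i : ℕ) :
    ∑ k ∈ Finset.range (i + 1), (∏ l ∈ Finset.Ico k i, a l) ^ 2 = lineTrekFactor a i := by
  induction i with
  | zero => simp [lineTrekFactor]
  | succ i ih =>
    rw [Finset.sum_range_succ]
    have h1 : ∀ k ∈ Finset.range (i + 1), (∏ l ∈ Finset.Ico k (i + 1), a l) ^ 2
        = a i ^ 2 * (∏ l ∈ Finset.Ico k i, a l) ^ 2 := by
      intro k hk
      rw [Finset.prod_Ico_succ_top (Nat.lt_succ_iff.mp (Finset.mem_range.mp hk))]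
      ring
    rw [Finset.sum_congr rfl h1, ← Finset.mul_sum, ih]
    simp [lineTrekFactor]
    ring

/-- Trek rule for the directed line graph: for i < j, Σ_{ij} equals the nested
collider-free-loop factor at i times the product of edge weights along the
unique path from i to j. -/
theorem line_graph_covariance (p : ℕ) (a : ℕ → ℝ)
    (A : Matrix (Fin p) (Fin p) ℝ)
    (hA : ∀ i j : Fin p, A i j = if (j : ℕ) = (i : ℕ) + 1 then a i else 0)
    (Sgm : Matrix (Fin p) (Fin p) ℝ)
    (hSgm : Sgm = ((1 - A) * (1 - A)ᵀ)⁻¹) :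
    ∀ i j : Fin p, (i : ℕ) < (j : ℕ) →
      Sgm i j = lineTrekFactor a i * ∏ k ∈ Finset.Ico (i : ℕ) (j : ℕ), a k := by
  set B : Matrix (Fin p) (Fin p) ℝ :=
    fun i j => if (i : ℕ) ≤ (j : ℕ) then ∏ k ∈ Finset.Ico (i : ℕ) (j : ℕ), a k else 0 with hB
  -- (1 - A) * B = 1
  have hMB : (1 - A) * B = 1 := by
    ext i j
    rw [Matrix.sub_mul, Matrix.one_mul, Matrix.sub_apply]
    have hS : (A * B) i j = if h : (i : ℕ) + 1 < p then a i * B ⟨(i : ℕ) + 1, h⟩ j else 0 := by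
      rw [Matrix.mul_apply]
      split
      · rename_i h
        rw [Finset.sum_eq_single (⟨(i : ℕ) + 1, h⟩ : Fin p)]
        · rw [hA]; simp
        · intro k _ hk
          rw [hA]
          have : (k : ℕ) ≠ (i : ℕ) + 1 := by
            intro hc; apply hk; apply Fin.ext; simpa using hc
          simp [this]
        · simp
      · rename_i h
        apply Finset.sum_eq_zero
        intro k _
        rw [hA]
        have : (k : ℕ) ≠ (i : ℕ) + 1 := by
          intro hc; exact h (hc ▸ k.isLt)
        simp [this]
    rw [hS]
    rcases lt_trichotomy (i : ℕ) (j : ℕ) with hij | hij | hij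
    · -- i < j : goal is prod minus a i * prod (i+1..) = 0
      have hip : (i : ℕ) + 1 < p := lt_of_le_of_lt hij j.isLt
      have hone : (1 : Matrix (Fin p) (Fin p) ℝ) i j = 0 := by
        rw [Matrix.one_apply_ne]; intro hc; exact absurd (hc ▸ rfl) (Nat.ne_of_lt hij ∘ congrArg _)
      rw [hone]
      simp only [hB, dif_pos hip]
      rw [if_pos (le_of_lt hij), if_pos (show (i : ℕ) + 1 ≤ (j : ℕ) from hij)]
      rw [Finset.prod_eq_prod_Ico_succ_bot hij]
      ring
    · -- i = j
      have hij' : i = j := Fin.ext hij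
      subst hij'
      rw [Matrix.one_apply_eq]
      simp only [hB]
      rw [if_pos le_rfl, Finset.Ico_self, Finset.prod_empty]
      split
      · rename_i h
        rw [if_neg (by omega)]
        ring
      · ring
    · -- j < i
      have hone : (1 : Matrix (Fin p) (Fin p) ℝ) i j = 0 := by
        rw [Matrix.one_apply_ne]; intro hc; exact absurd (hc ▸ rfl) (Nat.ne_of_lt hij ∘ congrArg _)
      rw [hone]
      simp only [hB]
      rw [if_neg (by omega)]
      split
      · rename_i h
        rw [if_neg (by simp; omega)]
        ring
      · ring
  have hBM : B * (1 - A) = 1 := mul_eq_one_comm.mp hMB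
  have hSgm2 : Sgm = Bᵀ * B := by
    rw [hSgm]
    apply Matrix.inv_eq_right_inv
    have h1 : (1 - A)ᵀ * Bᵀ = 1 := by
      rw [← Matrix.transpose_mul, hBM, Matrix.transpose_one]
    calc (1 - A) * (1 - A)ᵀ * (Bᵀ * B)
        = (1 - A) * ((1 - A)ᵀ * Bᵀ) * B := by
          rw [Matrix.mul_assoc, Matrix.mul_assoc, Matrix.mul_assoc]
      _ = 1 := by rw [h1, Matrix.mul_one, hMB]
  intro i j hij
  rw [hSgm2, Matrix.mul_apply]
  simp only [Matrix.transpose_apply]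
  have h0 : ∑ k : Fin p, B k i * B k j
      = ∑ n ∈ Finset.range p,
        ((if n ≤ (i : ℕ) then ∏ l ∈ Finset.Ico n (i : ℕ), a l else 0) *
         (if n ≤ (j : ℕ) then ∏ l ∈ Finset.Ico n (j : ℕ), a l else 0)) :=
    Fin.sum_univ_eq_sum_range
      (fun n => (if n ≤ (i : ℕ) then ∏ l ∈ Finset.Ico n (i : ℕ), a l else 0) *
        (if n ≤ (j : ℕ) then ∏ l ∈ Finset.Ico n (j : ℕ), a l else 0)) p
  rw [h0]
  have hsub : ∑ n ∈ Finset.range p,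
      ((if n ≤ (i : ℕ) then ∏ l ∈ Finset.Ico n (i : ℕ), a l else 0) *
       (if n ≤ (j : ℕ) then ∏ l ∈ Finset.Ico n (j : ℕ), a l else 0))
      = ∑ n ∈ Finset.range ((i : ℕ) + 1),
      ((if n ≤ (i : ℕ) then ∏ l ∈ Finset.Ico n (i : ℕ), a l else 0) *
       (if n ≤ (j : ℕ) then ∏ l ∈ Finset.Ico n (j : ℕ), a l else 0)) := by
    apply (Finset.sum_subset ?_ ?_).symm
    · intro n hn
      simp only [Finset.mem_range] at *
      exact lt_of_lt_of_le hn (Nat.succ_le_of_lt i.isLt)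
    · intro n _ hn
      simp only [Finset.mem_range] at hn
      rw [if_neg (by omega)]
      ring
  rw [hsub]
  have heq : ∀ n ∈ Finset.range ((i : ℕ) + 1),
      ((if n ≤ (i : ℕ) then ∏ l ∈ Finset.Ico n (i : ℕ), a l else 0) *
       (if n ≤ (j : ℕ) then ∏ l ∈ Finset.Ico n (j : ℕ), a l else 0))
      = (∏ l ∈ Finset.Ico n (i : ℕ), a l) ^ 2 * ∏ l ∈ Finset.Ico (i : ℕ) (j : ℕ), a l := by
    intro n hn
    have hni : n ≤ (i : ℕ) := Nat.lt_succ_iff.mp (Finset.mem_range.mp hn)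
    rw [if_pos hni, if_pos (le_trans hni (le_of_lt hij))]
    rw [← Finset.prod_Ico_consecutive a hni (le_of_lt hij)]
    ring
  rw [Finset.sum_congr rfl heq, ← Finset.sum_mul, trek_sum]
end

section
/- Let A be the strictly upper triangular matrix of a directed line graph on p nodes with edge weights a₁,…,a_{p−1} ∈ [−1,1], and let Σ = ((I−A)(I−A)ᵀ)⁻¹. Then for all i < j, Σ_{ij} = 0 if and only if a_k = 0 for some k with i ≤ k ≤ j−1. -/
open Matrix Finset

/-!
The matrix `I - A` is unit upper bidiagonal, and its inverse `C` has entries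
`C k j = a k * ⋯ * a (j - 1)` for `k ≤ j`: the path products of the line graph. Hence
`Σ = Cᵀ C`, and for `i ≤ j` every path product `C k j` with `k ≤ i` factors through `i`, so
`Σ i j = (a i * ⋯ * a (j - 1)) * ∑_{k ≤ i} (a k * ⋯ * a (i - 1))²`. The sum contains the empty
product `1` (from `k = i`), so it is positive and `Σ i j` vanishes exactly when an edge weight
on the path from `i` to `j` does.
-/

theorem Matrix.mul_transpose_self_inv_eq_of_mul_eq_one {n R : Type*} [Fintype n] [DecidableEq n]
    [CommRing R] {B C : Matrix n n R} (h : B * C = 1) : (B * Bᵀ)⁻¹ = Cᵀ * C := by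
  rw [mul_inv_rev, ← transpose_nonsing_inv, inv_eq_right_inv h]

section LineGraph

variable {R : Type*} {p : ℕ}

def lineGraphMatrix [Zero R] (a : ℕ → R) : Matrix (Fin p) (Fin p) R :=
  Matrix.of fun i j => if (j : ℕ) = i + 1 then a i else 0

def pathProductMatrix [CommMonoidWithZero R] (a : ℕ → R) : Matrix (Fin p) (Fin p) R :=
  Matrix.of fun k j => if (k : ℕ) ≤ j then ∏ l ∈ Ico (k : ℕ) j, a l else 0

theorem lineGraphMatrix_mul_apply [NonUnitalNonAssocSemiring R] (a : ℕ → R)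
    (M : Matrix (Fin p) (Fin p) R) (i j : Fin p) :
    (lineGraphMatrix a * M : Matrix (Fin p) (Fin p) R) i j = if h : (i : ℕ) + 1 < p then a i * M ⟨i + 1, h⟩ j else 0 := by
  simp only [mul_apply, lineGraphMatrix, of_apply, ite_mul, zero_mul]
  split_ifs with h
  · rw [sum_eq_single ⟨i + 1, h⟩ (fun k _ hk => if_neg (by simpa [Fin.ext_iff] using hk))
      (by simp)]
    simp
  · exact sum_eq_zero fun k _ => if_neg fun (hk : (k : ℕ) = i + 1) => h (hk ▸ k.isLt)

theorem pathProductMatrix_apply_of_lt [CommMonoidWithZero R] (a : ℕ → R) {k j : Fin p}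
    (h : (j : ℕ) < k) : pathProductMatrix a k j = 0 :=
  if_neg h.not_ge

theorem one_sub_lineGraphMatrix_mul_pathProductMatrix [CommRing R] (a : ℕ → R) :
    (1 - lineGraphMatrix a) * pathProductMatrix a = (1 : Matrix (Fin p) (Fin p) R) := by
  ext i j
  rw [sub_mul, one_mul, Matrix.sub_apply, lineGraphMatrix_mul_apply, sub_eq_iff_eq_add]
  rcases lt_trichotomy (i : ℕ) j with hij | hij | hij
  · have hi : (i : ℕ) + 1 < p := (Nat.succ_le_of_lt hij).trans_lt j.isLt
    rw [dif_pos hi, one_apply_ne (Fin.ne_of_lt hij), zero_add]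
    simp only [pathProductMatrix, of_apply, if_pos hij.le, if_pos (Nat.succ_le_of_lt hij)]
    exact prod_eq_prod_Ico_succ_bot hij a
  · obtain rfl := Fin.ext hij
    have hii : pathProductMatrix a i i = 1 := by simp [pathProductMatrix]
    rw [hii, one_apply_eq, left_eq_add, dite_eq_right_iff]
    exact fun _ => by rw [pathProductMatrix_apply_of_lt a (Nat.lt_succ_self _), mul_zero]
  · rw [pathProductMatrix_apply_of_lt a hij, one_apply_ne (Fin.ne_of_gt hij), zero_add,
      eq_comm, dite_eq_right_iff]
    exact fun _ => by rw [pathProductMatrix_apply_of_lt a (Nat.lt_succ_of_lt hij), mul_zero]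

theorem pathProductMatrix_transpose_mul_apply_of_le [CommSemiring R] (a : ℕ → R) {i j : Fin p}
    (hij : i ≤ j) :
    ((pathProductMatrix a)ᵀ * pathProductMatrix a : Matrix (Fin p) (Fin p) R) i j =
      (∏ l ∈ Ico (i : ℕ) j, a l) * ∑ k ∈ Iic i, (∏ l ∈ Ico (k : ℕ) i, a l) ^ 2 := by
  rw [mul_apply, mul_sum, ← sum_subset (subset_univ (Iic i))]
  · refine sum_congr rfl fun k hk => ?_
    have hki : (k : ℕ) ≤ i := (mem_Iic.mp hk : k ≤ i)
    have hij : (i : ℕ) ≤ j := hij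
    simp only [transpose_apply, pathProductMatrix, of_apply, if_pos hki, if_pos (hki.trans hij),
      ← prod_Ico_consecutive a hki hij]
    ring
  · intro k _ hk
    rw [transpose_apply, pathProductMatrix_apply_of_lt a (not_le.mp fun hki : k ≤ i => hk (mem_Iic.mpr hki)), zero_mul]

theorem sum_sq_pathProduct_pos [CommRing R] [LinearOrder R] [IsStrictOrderedRing R]
    (a : ℕ → R) (i : Fin p) : 0 < ∑ k ∈ Iic i, (∏ l ∈ Ico (k : ℕ) i, a l) ^ 2 :=
  sum_pos' (fun _ _ => sq_nonneg _) ⟨i, mem_Iic.mpr le_rfl, by simp⟩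

end LineGraph

theorem line_graph_covariance_zero_iff_general (p : ℕ) (a : ℕ → ℝ)
    (A : Matrix (Fin p) (Fin p) ℝ)
    (hA : ∀ i j : Fin p, A i j = if (j : ℕ) = (i : ℕ) + 1 then a i else 0)
    (Sgm : Matrix (Fin p) (Fin p) ℝ)
    (hSgm : Sgm = ((1 - A) * (1 - A)ᵀ)⁻¹) :
    ∀ i j : Fin p, (i : ℕ) < (j : ℕ) →
      (Sgm i j = 0 ↔ ∃ k, (i : ℕ) ≤ k ∧ k < (j : ℕ) ∧ a k = 0) := by
  intro i j hij
  obtain rfl : A = lineGraphMatrix a := Matrix.ext hA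
  have hSgm_eq : Sgm = (pathProductMatrix a)ᵀ * pathProductMatrix a :=
    hSgm.trans <| mul_transpose_self_inv_eq_of_mul_eq_one <|
      one_sub_lineGraphMatrix_mul_pathProductMatrix a
  rw [hSgm_eq, pathProductMatrix_transpose_mul_apply_of_le a hij.le, mul_eq_zero,
    or_iff_left (sum_sq_pathProduct_pos a i).ne', prod_eq_zero_iff]
  simp only [mem_Ico, and_assoc]

/-- For the directed line graph with edge weights in [−1,1], the covariance
Σ_{ij} (i < j) vanishes iff some edge weight on the path from i to j is zero. -/
theorem line_graph_covariance_zero_iff (p : ℕ) (a : ℕ → ℝ)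
    (ha : ∀ k, a k ∈ Set.Icc (-1 : ℝ) 1)
    (A : Matrix (Fin p) (Fin p) ℝ)
    (hA : ∀ i j : Fin p, A i j = if (j : ℕ) = (i : ℕ) + 1 then a i else 0)
    (Sgm : Matrix (Fin p) (Fin p) ℝ)
    (hSgm : Sgm = ((1 - A) * (1 - A)ᵀ)⁻¹) :
    ∀ i j : Fin p, (i : ℕ) < (j : ℕ) →
      (Sgm i j = 0 ↔ ∃ k, (i : ℕ) ≤ k ∧ k < (j : ℕ) ∧ a k = 0) :=
  line_graph_covariance_zero_iff_general p a A hA Sgm hSgm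
end

section
/- Let λ ∈ (0,1) and consider the set M = {(a₁,a₂,a₃) ∈ [−1,1]³ : |a₁| ≤ λ or |a₂| ≤ λ or |a₃| ≤ λ or |a₁ − a₂a₃| ≤ λ} (3-node fully connected DAG). Then its relative volume satisfies vol(M)/8 > 1 − (1−λ)³. -/
open MeasureTheory

/-- 3-node fully connected DAG: the set of λ-strong-unfaithful parameters
contains the three slabs and the fattened surface {|a₁ − a₂a₃| ≤ λ}, and its
relative volume strictly exceeds 1 − (1−λ)³. -/
theorem threeNode_unfaithful_volume (lam : ℝ) (hlam : lam ∈ Set.Ioo (0 : ℝ) 1)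
    (M : Set (Fin 3 → ℝ))
    (hM : M = {a : Fin 3 → ℝ | (∀ i, a i ∈ Set.Icc (-1 : ℝ) 1) ∧
      (|a 0| ≤ lam ∨ |a 1| ≤ lam ∨ |a 2| ≤ lam ∨ |a 0 - a 1 * a 2| ≤ lam)}) :
    ENNReal.ofReal (8 * (1 - (1 - lam) ^ 3)) < volume M := by
  obtain ⟨hl0, hl1⟩ := hlam
  set v : ℝ := (max lam (1 - lam / 4) + 1) / 2 with hvdef
  have hvlam : lam < v := by
    have h1 : lam ≤ max lam (1 - lam / 4) := le_max_left _ _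
    have : lam < (lam + 1) / 2 := by linarith
    calc lam < (lam + 1) / 2 := this
    _ ≤ v := by rw [hvdef]; linarith
  have hv1 : v < 1 := by
    have h1 : max lam (1 - lam / 4) < 1 := max_lt hl1 (by linarith)
    rw [hvdef]; linarith
  have hv18 : 1 - lam / 8 ≤ v := by
    have h1 : 1 - lam / 4 ≤ max lam (1 - lam / 4) := le_max_right _ _
    rw [hvdef]; linarith
  have hv0 : 0 < v := lt_trans hl0 hvlam
  -- the coordinate interval sets
  set D : Set ℝ := Set.Icc (-1 : ℝ) 1 \ Set.Icc (-lam) lam with hDdef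
  have hDmeas : MeasurableSet D := measurableSet_Icc.diff measurableSet_Icc
  have hDvol : volume D = ENNReal.ofReal (2 - 2 * lam) := by
    rw [hDdef, measure_diff (Set.Icc_subset_Icc (by linarith) (by linarith))
      measurableSet_Icc.nullMeasurableSet (by simp), Real.volume_Icc, Real.volume_Icc,
      ← ENNReal.ofReal_sub _ (by linarith)]
    ring_nf
  -- the four disjoint pieces
  set T0 : Set (Fin 3 → ℝ) :=
    Set.pi Set.univ ![Set.Icc (-lam) lam, Set.Icc (-1 : ℝ) 1, Set.Icc (-1 : ℝ) 1] with hT0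
  set T1 : Set (Fin 3 → ℝ) :=
    Set.pi Set.univ ![D, Set.Icc (-lam) lam, Set.Icc (-1 : ℝ) 1] with hT1
  set T2 : Set (Fin 3 → ℝ) :=
    Set.pi Set.univ ![D, D, Set.Icc (-lam) lam] with hT2
  set B : Set (Fin 3 → ℝ) :=
    Set.pi Set.univ ![Set.Icc v 1, Set.Icc v 1, Set.Icc v 1] with hB
  have hsub : T0 ∪ T1 ∪ T2 ∪ B ⊆ M := by
    rw [hM]
    rintro a (((h | h) | h) | h) <;>
      simp only [hT0, hT1, hT2, hB, Set.mem_univ_pi, Fin.forall_fin_succ,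
        Fin.forall_fin_zero_pi, Matrix.cons_val_zero, Matrix.cons_val_one, Matrix.head_cons,
        Matrix.cons_val_succ, Fin.succ_zero_eq_one, Fin.succ_one_eq_two, hDdef, Set.mem_diff, Set.mem_Icc] at h
    · obtain ⟨⟨h00, h01⟩, ⟨h10, h11⟩, ⟨h20, h21⟩, -⟩ := h
      refine ⟨?_, Or.inl (abs_le.mpr ⟨h00, h01⟩)⟩
      intro i
      fin_cases i <;> constructor <;> simp <;> linarith
    · obtain ⟨⟨⟨h00, h01⟩, -⟩, ⟨h10, h11⟩, ⟨h20, h21⟩, -⟩ := h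
      refine ⟨?_, Or.inr (Or.inl (abs_le.mpr ⟨h10, h11⟩))⟩
      intro i
      fin_cases i <;> constructor <;> simp <;> linarith
    · obtain ⟨⟨⟨h00, h01⟩, -⟩, ⟨⟨h10, h11⟩, -⟩, ⟨h20, h21⟩, -⟩ := h
      refine ⟨?_, Or.inr (Or.inr (Or.inl (abs_le.mpr ⟨h20, h21⟩)))⟩
      intro i
      fin_cases i <;> constructor <;> simp <;> linarith
    · obtain ⟨⟨h00, h01⟩, ⟨h10, h11⟩, ⟨h20, h21⟩, -⟩ := h
      refine ⟨?_, Or.inr (Or.inr (Or.inr ?_))⟩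
      · intro i
        fin_cases i <;> constructor <;> simp <;> linarith
      · rw [abs_le]
        constructor
        · nlinarith
        · nlinarith
  -- measurability
  have hmT1 : MeasurableSet T1 := by
    rw [hT1]
    refine MeasurableSet.univ_pi fun i => ?_
    fin_cases i <;> simp [hDmeas]
  have hmT2 : MeasurableSet T2 := by
    rw [hT2]
    refine MeasurableSet.univ_pi fun i => ?_
    fin_cases i <;> simp [hDmeas]
  have hmB : MeasurableSet B := by
    rw [hB]
    refine MeasurableSet.univ_pi fun i => ?_
    fin_cases i <;> simp
  -- disjointness
  have djT0T1 : Disjoint T0 T1 := by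
    rw [Set.disjoint_left]
    intro a h0 h1
    have h0' := h0 0 (Set.mem_univ 0)
    have h1' := h1 0 (Set.mem_univ 0)
    simp only [Matrix.cons_val_zero] at h0' h1'
    exact h1'.2 h0'
  have djT0T2 : Disjoint T0 T2 := by
    rw [Set.disjoint_left]
    intro a h0 h1
    have h0' := h0 0 (Set.mem_univ 0)
    have h1' := h1 0 (Set.mem_univ 0)
    simp only [Matrix.cons_val_zero] at h0' h1'
    exact h1'.2 h0'
  have djT1T2 : Disjoint T1 T2 := by
    rw [Set.disjoint_left]
    intro a h0 h1
    have h0' := h0 1 (Set.mem_univ 1)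
    have h1' := h1 1 (Set.mem_univ 1)
    simp only [Matrix.cons_val_one, Matrix.head_cons] at h0' h1'
    exact h1'.2 h0'
  have hIccdj : Disjoint (Set.Icc (-lam) lam) (Set.Icc v 1) := by
    rw [Set.disjoint_left]
    rintro x ⟨-, hx2⟩ ⟨hx3, -⟩
    linarith
  have djT0B : Disjoint T0 B := by
    rw [Set.disjoint_left]
    intro a h0 h1
    have h0' := h0 0 (Set.mem_univ 0)
    have h1' := h1 0 (Set.mem_univ 0)
    simp only [Matrix.cons_val_zero] at h0' h1'
    exact Set.disjoint_left.mp hIccdj h0' h1'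
  have djT1B : Disjoint T1 B := by
    rw [Set.disjoint_left]
    intro a h0 h1
    have h0' := h0 1 (Set.mem_univ 1)
    have h1' := h1 1 (Set.mem_univ 1)
    simp only [Matrix.cons_val_one, Matrix.head_cons] at h0' h1'
    exact Set.disjoint_left.mp hIccdj h0' h1'
  have djT2B : Disjoint T2 B := by
    rw [Set.disjoint_left]
    intro a h0 h1
    have h0' := h0 2 (Set.mem_univ 2)
    have h1' := h1 2 (Set.mem_univ 2)
    simp only [Matrix.cons_val_succ, Matrix.cons_val_one, Matrix.head_cons] at h0' h1'
    exact Set.disjoint_left.mp hIccdj h0' h1'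
  -- volumes of pieces
  have hvolT0 : volume T0 = ENNReal.ofReal (8 * lam) := by
    rw [hT0, volume_pi_pi, Fin.prod_univ_three]
    simp only [Matrix.cons_val_zero, Matrix.cons_val_one, Matrix.head_cons,
      Matrix.cons_val_two, Matrix.tail_cons, Real.volume_Icc]
    rw [← ENNReal.ofReal_mul (by linarith), ← ENNReal.ofReal_mul (by nlinarith)]
    congr 1; ring
  have hvolT1 : volume T1 = ENNReal.ofReal (8 * lam * (1 - lam)) := by
    rw [hT1, volume_pi_pi, Fin.prod_univ_three]
    simp only [Matrix.cons_val_zero, Matrix.cons_val_one, Matrix.head_cons,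
      Matrix.cons_val_two, Matrix.tail_cons, Real.volume_Icc, hDvol]
    rw [← ENNReal.ofReal_mul (by linarith), ← ENNReal.ofReal_mul (by nlinarith)]
    congr 1; ring
  have hvolT2 : volume T2 = ENNReal.ofReal (8 * lam * (1 - lam) ^ 2) := by
    rw [hT2, volume_pi_pi, Fin.prod_univ_three]
    simp only [Matrix.cons_val_zero, Matrix.cons_val_one, Matrix.head_cons,
      Matrix.cons_val_two, Matrix.tail_cons, Real.volume_Icc, hDvol]
    rw [← ENNReal.ofReal_mul (by linarith), ← ENNReal.ofReal_mul (by nlinarith)]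
    congr 1; ring
  have hvolB : volume B = ENNReal.ofReal ((1 - v) ^ 3) := by
    rw [hB, volume_pi_pi, Fin.prod_univ_three]
    simp only [Matrix.cons_val_zero, Matrix.cons_val_one, Matrix.head_cons,
      Matrix.cons_val_two, Matrix.tail_cons, Real.volume_Icc]
    rw [← ENNReal.ofReal_mul (by linarith), ← ENNReal.ofReal_mul (by nlinarith)]
    congr 1; ring
  -- total volume of union
  have hunion : volume (T0 ∪ T1 ∪ T2 ∪ B)
      = volume T0 + volume T1 + volume T2 + volume B := by
    rw [measure_union (Disjoint.union_left (Disjoint.union_left djT0B djT1B) djT2B) hmB,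
      measure_union (Disjoint.union_left djT0T2 djT1T2) hmT2,
      measure_union djT0T1 hmT1]
  have h1v : (0:ℝ) < 1 - v := by linarith
  calc ENNReal.ofReal (8 * (1 - (1 - lam) ^ 3))
      < volume T0 + volume T1 + volume T2 + volume B := by
        rw [hvolT0, hvolT1, hvolT2, hvolB,
          ← ENNReal.ofReal_add (by nlinarith) (by nlinarith),
          ← ENNReal.ofReal_add (by nlinarith) (by nlinarith),
          ← ENNReal.ofReal_add (by nlinarith) (by positivity)]
        rw [ENNReal.ofReal_lt_ofReal_iff (by nlinarith [pow_pos h1v 3])]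
        nlinarith [pow_pos h1v 3]
    _ = volume (T0 ∪ T1 ∪ T2 ∪ B) := hunion.symm
    _ ≤ volume M := measure_mono hsub
end
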